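/- arXiv:1201.4116 — 5 statements merged into one kernel-verified Lean document; each statement's English description precedes it below -/
import Mathlib

section
/- If there exists a nonnegative vector ρ̄ ∈ ℝ_{≥0}^n with f_i(ρ̄) ≤ ρ̄_i for every cell i, then the load-coupling system has a nonnegative solution: there exists ρ* ∈ ℝ_{≥0}^n with f_i(ρ*) = ρ*_i for every cell i. -/
/-!
The map `ρ ↦ (f i ρ)ᵢ` is monotone on the nonnegative orthant, since each summand of `f i` is
increasing in the interference `∑ b ρ`. Hence it sends `0` above itself and, by feasibility, the
order interval `[0, ρ̄]` into itself; Knaster–Tarski on the complete lattice `[0, ρ̄]` gives a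
fixed point.
-/

open Finset Set

theorem exists_isFixedPt_mem_Icc_of_monotoneOn {α : Type*} [ConditionallyCompleteLattice α]
    {g : α → α} {a b : α} (hab : a ≤ b) (hg : MonotoneOn g (Icc a b))
    (ha : a ≤ g a) (hb : g b ≤ b) : ∃ x ∈ Icc a b, g x = x := by
  have : Fact (a ≤ b) := ⟨hab⟩
  have hmaps : MapsTo g (Icc a b) (Icc a b) := fun x hx =>
    ⟨ha.trans (hg (left_mem_Icc.2 hab) hx hx.1), (hg hx (right_mem_Icc.2 hab) hx.2).trans hb⟩
  let G : Icc a b →o Icc a b :=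
    ⟨hmaps.restrict, fun x y hxy => hg x.2 y.2 hxy⟩
  exact ⟨_, (OrderHom.lfp G).2, congrArg Subtype.val (OrderHom.map_lfp G)⟩

theorem one_div_mul_logb_one_add_one_div_monotoneOn {a : ℝ} (ha : 0 < a) :
    MonotoneOn (fun x => 1 / (a * Real.logb 2 (1 + 1 / x))) (Ioi 0) := by
  intro x (hx : 0 < x) y (hy : 0 < y) hxy
  have hlog_pos : 0 < Real.logb 2 (1 + 1 / y) :=
    Real.logb_pos one_lt_two (lt_add_of_pos_right 1 (by positivity))
  have hlog_le : Real.logb 2 (1 + 1 / y) ≤ Real.logb 2 (1 + 1 / x) :=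
    Real.logb_le_logb_of_le one_lt_two (by positivity)
      (add_le_add_right (one_div_le_one_div_of_le hx hxy) 1)
  exact one_div_le_one_div_of_le (by positivity) (mul_le_mul_of_nonneg_left hlog_le ha.le)

section CellLoad

variable {ι κ : Type*} [Fintype ι] [DecidableEq ι]
  (J : Finset κ) (a c : κ → ℝ) (b : ι → κ → ℝ) (i : ι)

/-- `cellLoad (J i) (a i) (c i) (b i) i` is the load function `f_i`. -/
noncomputable def cellLoad (ρ : ι → ℝ) : ℝ :=
  ∑ j ∈ J, 1 / (a j * Real.logb 2 (1 + 1 / (∑ k ∈ univ.erase i, b k j * ρ k + c j)))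

variable {J a c b i}

theorem interference_nonneg (hb : ∀ k ≠ i, ∀ j ∈ J, 0 ≤ b k j) {j : κ} (hj : j ∈ J)
    {ρ : ι → ℝ} (hρ : 0 ≤ ρ) : 0 ≤ ∑ k ∈ univ.erase i, b k j * ρ k :=
  sum_nonneg fun k hk => mul_nonneg (hb k (ne_of_mem_erase hk) j hj) (hρ k)

theorem interference_mono (hb : ∀ k ≠ i, ∀ j ∈ J, 0 ≤ b k j) {j : κ} (hj : j ∈ J)
    {ρ σ : ι → ℝ} (hρσ : ρ ≤ σ) :
    ∑ k ∈ univ.erase i, b k j * ρ k ≤ ∑ k ∈ univ.erase i, b k j * σ k :=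
  sum_le_sum fun k hk => mul_le_mul_of_nonneg_left (hρσ k) (hb k (ne_of_mem_erase hk) j hj)

theorem cellLoad_nonneg (ha : ∀ j ∈ J, 0 < a j) (hc : ∀ j ∈ J, 0 < c j)
    (hb : ∀ k ≠ i, ∀ j ∈ J, 0 ≤ b k j) {ρ : ι → ℝ} (hρ : 0 ≤ ρ) :
    0 ≤ cellLoad J a c b i ρ := by
  refine sum_nonneg fun j hj => ?_
  have hS : 0 < ∑ k ∈ univ.erase i, b k j * ρ k + c j :=
    add_pos_of_nonneg_of_pos (interference_nonneg hb hj hρ) (hc j hj)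
  have hlog : 0 < Real.logb 2 (1 + 1 / (∑ k ∈ univ.erase i, b k j * ρ k + c j)) :=
    Real.logb_pos one_lt_two (lt_add_of_pos_right 1 (by positivity))
  have := ha j hj
  positivity

theorem cellLoad_monotoneOn (ha : ∀ j ∈ J, 0 < a j) (hc : ∀ j ∈ J, 0 < c j)
    (hb : ∀ k ≠ i, ∀ j ∈ J, 0 ≤ b k j) : MonotoneOn (cellLoad J a c b i) (Ici 0) := by
  intro ρ (hρ : 0 ≤ ρ) σ (hσ : 0 ≤ σ) hρσ
  refine sum_le_sum fun j hj => ?_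
  have hpos : ∀ {τ : ι → ℝ}, 0 ≤ τ → ∑ k ∈ univ.erase i, b k j * τ k + c j ∈ Set.Ioi 0 :=
    fun hτ => add_pos_of_nonneg_of_pos (interference_nonneg hb hj hτ) (hc j hj)
  exact one_div_mul_logb_one_add_one_div_monotoneOn (ha j hj) (hpos hρ) (hpos hσ)
    (add_le_add_left (interference_mono hb hj hρσ) _)

end CellLoad

theorem stmt_6_general
    (n : ℕ)
    (J : Fin n → Finset ℕ)
    (a c : Fin n → ℕ → ℝ) (b : Fin n → Fin n → ℕ → ℝ)
    (ha : ∀ i, ∀ j ∈ J i, 0 < a i j)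
    (hc : ∀ i, ∀ j ∈ J i, 0 < c i j)
    (hb : ∀ i k, k ≠ i → ∀ j ∈ J i, 0 < b i k j)
    (f : Fin n → (Fin n → ℝ) → ℝ)
    (hf : ∀ i ρ, f i ρ =
      ∑ j ∈ J i, 1 / (a i j * Real.logb 2
        (1 + 1 / (∑ k ∈ Finset.univ.erase i, b i k j * ρ k + c i j))))
    (ρbar : Fin n → ℝ) (hbar : ∀ i, 0 ≤ ρbar i)
    (hfeas : ∀ i, f i ρbar ≤ ρbar i) :
    ∃ ρstar : Fin n → ℝ, (∀ i, 0 ≤ ρstar i) ∧ ∀ i, f i ρstar = ρstar i := by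
  have hf' : ∀ i, f i = cellLoad (J i) (a i) (c i) (b i) i := fun i => funext (hf i)
  have hb' : ∀ i, ∀ k ≠ i, ∀ j ∈ J i, 0 ≤ b i k j := fun i k hk j hj => (hb i k hk j hj).le
  have hmono : MonotoneOn (fun ρ i => f i ρ) (Icc 0 ρbar) := fun ρ hρ σ hσ hρσ i => by
    simp only [hf']
    exact cellLoad_monotoneOn (ha i) (hc i) (hb' i) hρ.1 hσ.1 hρσ
  obtain ⟨ρstar, hmem, hfix⟩ := exists_isFixedPt_mem_Icc_of_monotoneOn hbar hmono
    (fun i => (hf' i).symm ▸ cellLoad_nonneg (ha i) (hc i) (hb' i) le_rfl) hfeas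
  exact ⟨ρstar, hmem.1, fun i => congrFun hfix i⟩

/-- If there is a nonnegative `ρ̄` with `f(ρ̄) ≤ ρ̄`, then the load-coupling
system has a nonnegative fixed point. -/
theorem stmt_6
    (n : ℕ) (hn : 2 ≤ n)
    (J : Fin n → Finset ℕ) (hJ : ∀ i, (J i).Nonempty)
    (a c : Fin n → ℕ → ℝ) (b : Fin n → Fin n → ℕ → ℝ)
    (ha : ∀ i, ∀ j ∈ J i, 0 < a i j)
    (hc : ∀ i, ∀ j ∈ J i, 0 < c i j)
    (hb : ∀ i k, k ≠ i → ∀ j ∈ J i, 0 < b i k j)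
    (f : Fin n → (Fin n → ℝ) → ℝ)
    (hf : ∀ i ρ, f i ρ =
      ∑ j ∈ J i, 1 / (a i j * Real.logb 2
        (1 + 1 / (∑ k ∈ Finset.univ.erase i, b i k j * ρ k + c i j))))
    (ρbar : Fin n → ℝ) (hbar : ∀ i, 0 ≤ ρbar i)
    (hfeas : ∀ i, f i ρbar ≤ ρbar i) :
    ∃ ρstar : Fin n → ℝ, (∀ i, 0 ≤ ρstar i) ∧ ∀ i, f i ρstar = ρstar i :=
  stmt_6_general n J a c b ha hc hb f hf ρbar hbar hfeas
end

section
/- For all real numbers c and u with 0 < c ≤ u, one has 1/ln(1 + 1/u) − (u − c) ≥ 1/ln(1 + 1/c), with equality when u = c. -/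
/-!
The function `x ↦ 1 / log (1 + 1/x) - x` is monotone on `(0, ∞)`: its derivative is
`1 / (x (x + 1) log (1 + 1/x)²) - 1`, which is nonnegative because, with `y = √(1 + 1/x)`,
`log (1 + 1/x) = 2 log y ≤ y - 1/y = 1 / √(x (x + 1))`, an instance of `t ≤ sinh t` at `t = log y`.
-/

open Real Set

lemma two_mul_log_le_sub_inv {y : ℝ} (hy : 1 ≤ y) : 2 * log y ≤ y - y⁻¹ := by
  have h := self_le_sinh_iff.mpr (log_nonneg hy)
  rw [sinh_log (by linarith)] at h
  linarith

lemma log_one_add_inv_sq_le {x : ℝ} (hx : 0 < x) : log (1 + 1 / x) ^ 2 ≤ 1 / (x * (x + 1)) := by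
  set y := √(1 + 1 / x)
  have hy_sq : y ^ 2 = 1 + 1 / x := sq_sqrt (by positivity)
  have hy : 1 ≤ y := one_le_sqrt.mpr (by simp [hx.le])
  have hlog : log (1 + 1 / x) = 2 * log y := by
    rw [log_sqrt (by positivity)]; ring
  calc log (1 + 1 / x) ^ 2 ≤ (y - y⁻¹) ^ 2 := by
        rw [hlog]
        exact pow_le_pow_left₀ (by have := log_nonneg hy; positivity) (two_mul_log_le_sub_inv hy) 2
    _ = y ^ 2 - 2 + (y ^ 2)⁻¹ := by field_simp; ring
    _ = 1 / (x * (x + 1)) := by rw [hy_sq]; field_simp; ring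

lemma hasDerivAt_one_div_log_one_add_inv_sub_self {x : ℝ} (hx : 0 < x) :
    HasDerivAt (fun x => 1 / log (1 + 1 / x) - x)
      (1 / (x * (x + 1)) / log (1 + 1 / x) ^ 2 - 1) x := by
  have hlog : log (1 + x⁻¹) ≠ 0 := (log_pos (by simpa using hx)).ne'
  have h := (((hasDerivAt_inv hx.ne').const_add 1).log (by positivity)).fun_inv hlog
  simp only [one_div]
  refine (h.fun_sub (hasDerivAt_id' x)).congr_deriv ?_
  field_simp

lemma monotoneOn_one_div_log_one_add_inv_sub_self :
    MonotoneOn (fun x => 1 / log (1 + 1 / x) - x) (Ioi 0) := by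
  have hderiv := fun x (hx : x ∈ Ioi (0 : ℝ)) => hasDerivAt_one_div_log_one_add_inv_sub_self hx
  refine monotoneOn_of_hasDerivWithinAt_nonneg (convex_Ioi 0) (HasDerivAt.continuousOn hderiv)
    (fun x hx => (hderiv x (interior_subset hx)).hasDerivWithinAt) fun x hx => ?_
  rw [interior_Ioi] at hx
  have hlog : 0 < log (1 + 1 / x) := log_pos (by simpa using hx)
  rw [sub_nonneg, le_div_iff₀ (by positivity), one_mul]
  exact log_one_add_inv_sq_le hx

/-- For `0 < c ≤ u`: `1/ln(1+1/u) − (u − c) ≥ 1/ln(1+1/c)`, with equality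
when `u = c`. -/
theorem stmt_8 (c u : ℝ) (hc : 0 < c) (hcu : c ≤ u) :
    1 / Real.log (1 + 1 / c) ≤ 1 / Real.log (1 + 1 / u) - (u - c) ∧
    (u = c → 1 / Real.log (1 + 1 / u) - (u - c) = 1 / Real.log (1 + 1 / c)) := by
  refine ⟨?_, fun h => by rw [h, sub_self, sub_zero]⟩
  have hmono := monotoneOn_one_div_log_one_add_inv_sub_self hc (hc.trans_le hcu) hcu
  dsimp only at hmono
  linarith
end

section
/- If the linear system ρ = h⁰(ρ) has a nonnegative solution, then there exists ε > 0 such that the perturbed linear system ρ_i = f_i(0) + Σ_{k≠i} (H_{ik} + ε)·ρ_k (for all i) also has a nonnegative solution. -/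
/-!
Since `H ≥ 0` off the diagonal, `h^ε` is monotone, and `h^ε(0) = f(0) ≥ 0`. Because
`f(0) > 0` strictly, `h^ε(2ρ₀) = 2ρ₀ - f(0) + 2ε Σ_{k≠i} ρ₀ k ≤ 2ρ₀` for small `ε`, so `h^ε`
maps the order interval `[0, 2ρ₀]`, a complete lattice, into itself, and Knaster–Tarski gives
a fixed point there.
-/

open Finset Filter Topology

theorem Monotone.exists_isFixedPt_mem_Icc {α : Type*} [ConditionallyCompleteLattice α]
    {T : α → α} (hT : Monotone T) {a b : α} (hab : a ≤ b) (ha : a ≤ T a) (hb : T b ≤ b) :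
    ∃ x ∈ Set.Icc a b, Function.IsFixedPt T x := by
  have : Fact (a ≤ b) := ⟨hab⟩
  let T' : Set.Icc a b →o Set.Icc a b :=
    ⟨fun x => ⟨T x, ha.trans (hT x.2.1), (hT x.2.2).trans hb⟩, fun _ _ h => hT h⟩
  exact ⟨T'.lfp, T'.lfp.2, congrArg Subtype.val T'.map_lfp⟩

section OffDiagonalSystem

variable {ι : Type*} [Fintype ι] [DecidableEq ι]

/-- `ρ ↦ d + M ρ`, with the diagonal of `M` ignored. -/
def offDiagAffine (d : ι → ℝ) (M : ι → ι → ℝ) (ρ : ι → ℝ) (i : ι) : ℝ :=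
  d i + ∑ k ∈ univ.erase i, M i k * ρ k

theorem offDiagAffine_monotone {d : ι → ℝ} {M : ι → ι → ℝ}
    (hM : ∀ i k, k ≠ i → 0 ≤ M i k) : Monotone (offDiagAffine d M) := fun _ _ h i =>
  add_le_add_right (sum_le_sum fun k hk =>
    mul_le_mul_of_nonneg_left (h k) (hM i k (ne_of_mem_erase hk))) _

theorem exists_nonneg_fixedPt_offDiagAffine {d : ι → ℝ} {M : ι → ι → ℝ} (hd : 0 ≤ d)
    (hM : ∀ i k, k ≠ i → 0 ≤ M i k) {u : ι → ℝ} (hu : 0 ≤ u) (hsuper : offDiagAffine d M u ≤ u) :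
    ∃ ρ, 0 ≤ ρ ∧ offDiagAffine d M ρ = ρ := by
  obtain ⟨ρ, ⟨hρ, -⟩, hfix⟩ := (offDiagAffine_monotone hM).exists_isFixedPt_mem_Icc hu
    (fun i => by simpa [offDiagAffine] using hd i) hsuper
  exact ⟨ρ, hρ, hfix⟩

theorem offDiagAffine_add_const (d : ι → ℝ) (M : ι → ι → ℝ) (ε : ℝ) (ρ : ι → ℝ) (i : ι) :
    offDiagAffine d (fun i k => M i k + ε) ρ i =
      offDiagAffine d M ρ i + ε * ∑ k ∈ univ.erase i, ρ k := by
  simp only [offDiagAffine, add_mul, sum_add_distrib, mul_sum]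
  ring

/-- The slack `d > 0` absorbs the perturbation `2ε Σ_{k≠i} ρ₀ k`. -/
theorem eventually_offDiagAffine_add_const_two_mul_le {d : ι → ℝ} (hd : ∀ i, 0 < d i)
    {H : ι → ι → ℝ} {ρ₀ : ι → ℝ} (hρ₀ : offDiagAffine d H ρ₀ = ρ₀) :
    ∀ᶠ ε in 𝓝 0, offDiagAffine d (fun i k => H i k + ε) (2 * ρ₀) ≤ 2 * ρ₀ := by
  refine eventually_all.2 fun i => ?_
  set s := ∑ k ∈ univ.erase i, ρ₀ k
  have hlim : Tendsto (fun ε : ℝ => 2 * ε * s) (𝓝 0) (𝓝 0) := by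
    simpa using ((tendsto_id (x := 𝓝 (0 : ℝ))).const_mul 2).mul_const s
  filter_upwards [hlim.eventually (gt_mem_nhds (hd i))] with ε hε
  have hscale : offDiagAffine d H (2 * ρ₀) i = 2 * ρ₀ i - d i := by
    rw [← congrFun hρ₀ i]
    simp only [offDiagAffine, Pi.mul_apply, Pi.ofNat_apply, mul_left_comm _ (2 : ℝ), ← mul_sum]
    ring
  rw [offDiagAffine_add_const, hscale]
  simp only [Pi.mul_apply, Pi.ofNat_apply, ← mul_sum]
  linarith

end OffDiagonalSystem

theorem stmt_12_general
    (n : ℕ)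
    (J : Fin n → Finset ℕ) (hJ : ∀ i, (J i).Nonempty)
    (a c : Fin n → ℕ → ℝ) (b : Fin n → Fin n → ℕ → ℝ)
    (ha : ∀ i, ∀ j ∈ J i, 0 < a i j)
    (hc : ∀ i, ∀ j ∈ J i, 0 < c i j)
    (hb : ∀ i k, k ≠ i → ∀ j ∈ J i, 0 < b i k j)
    (f : Fin n → (Fin n → ℝ) → ℝ)
    (hf : ∀ i ρ, f i ρ =
      ∑ j ∈ J i, 1 / (a i j * Real.logb 2
        (1 + 1 / (∑ k ∈ Finset.univ.erase i, b i k j * ρ k + c i j))))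
    (H : Fin n → Fin n → ℝ)
    (hH : ∀ i k, H i k = Real.log 2 * ∑ j ∈ J i, b i k j / a i j)
    (h0 : Fin n → (Fin n → ℝ) → ℝ)
    (hh0 : ∀ i ρ, h0 i ρ =
      f i 0 + ∑ k ∈ Finset.univ.erase i, H i k * ρ k)
    (ρ₀ : Fin n → ℝ) (hρ₀ : ∀ i, 0 ≤ ρ₀ i) (hfix : ∀ i, h0 i ρ₀ = ρ₀ i) :
    ∃ ε : ℝ, 0 < ε ∧ ∃ ρ : Fin n → ℝ, (∀ i, 0 ≤ ρ i) ∧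
      ∀ i, f i 0 + ∑ k ∈ Finset.univ.erase i, (H i k + ε) * ρ k = ρ i := by
  have hload : ∀ i, 0 < f i 0 := fun i => by
    rw [hf]
    refine sum_pos (fun j hj => ?_) (hJ i)
    have hcj := hc i j hj
    have haj := ha i j hj
    have hlog : 0 < Real.logb 2 (1 + 1 / c i j) := Real.logb_pos one_lt_two (by simp [hcj])
    simp only [Pi.zero_apply, mul_zero, sum_const_zero, zero_add]
    positivity
  have hHnonneg : ∀ i k, k ≠ i → 0 ≤ H i k := fun i k hk => by
    rw [hH]
    exact mul_nonneg (Real.log_nonneg one_le_two)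
      (sum_nonneg fun j hj => (div_pos (hb i k hk j hj) (ha i j hj)).le)
  have hρ₀fix : offDiagAffine (fun i => f i 0) H ρ₀ = ρ₀ := funext fun i => by
    rw [← hfix i, hh0]
    rfl
  have hsmall := (eventually_offDiagAffine_add_const_two_mul_le hload hρ₀fix).filter_mono
    (nhdsWithin_le_nhds (s := Set.Ioi 0))
  obtain ⟨ε, hsuper, hε⟩ := (hsmall.and self_mem_nhdsWithin).exists
  obtain ⟨ρ, hρ, hρfix⟩ := exists_nonneg_fixedPt_offDiagAffine (fun i => (hload i).le)
    (fun i k hk => add_nonneg (hHnonneg i k hk) hε.le) (fun i => mul_nonneg zero_le_two (hρ₀ i))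
    hsuper
  exact ⟨ε, hε, ρ, hρ, congrFun hρfix⟩

/-- If `ρ = h⁰(ρ)` has a nonnegative solution, then for some `ε > 0` the
perturbed linear system `ρ_i = f_i(0) + Σ_{k≠i} (H_{ik}+ε)·ρ_k` also has
a nonnegative solution. -/
theorem stmt_12
    (n : ℕ) (hn : 2 ≤ n)
    (J : Fin n → Finset ℕ) (hJ : ∀ i, (J i).Nonempty)
    (a c : Fin n → ℕ → ℝ) (b : Fin n → Fin n → ℕ → ℝ)
    (ha : ∀ i, ∀ j ∈ J i, 0 < a i j)
    (hc : ∀ i, ∀ j ∈ J i, 0 < c i j)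
    (hb : ∀ i k, k ≠ i → ∀ j ∈ J i, 0 < b i k j)
    (f : Fin n → (Fin n → ℝ) → ℝ)
    (hf : ∀ i ρ, f i ρ =
      ∑ j ∈ J i, 1 / (a i j * Real.logb 2
        (1 + 1 / (∑ k ∈ Finset.univ.erase i, b i k j * ρ k + c i j))))
    (H : Fin n → Fin n → ℝ)
    (hH : ∀ i k, H i k = Real.log 2 * ∑ j ∈ J i, b i k j / a i j)
    (h0 : Fin n → (Fin n → ℝ) → ℝ)
    (hh0 : ∀ i ρ, h0 i ρ =
      f i 0 + ∑ k ∈ Finset.univ.erase i, H i k * ρ k)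
    (ρ₀ : Fin n → ℝ) (hρ₀ : ∀ i, 0 ≤ ρ₀ i) (hfix : ∀ i, h0 i ρ₀ = ρ₀ i) :
    ∃ ε : ℝ, 0 < ε ∧ ∃ ρ : Fin n → ℝ, (∀ i, 0 ≤ ρ i) ∧
      ∀ i, f i 0 + ∑ k ∈ Finset.univ.erase i, (H i k + ε) * ρ k = ρ i :=
  stmt_12_general n J hJ a c b ha hc hb f hf H hH h0 hh0 ρ₀ hρ₀ hfix
end

section
/- (Sufficient condition) If the linear system ρ = h⁰(ρ) has a nonnegative solution, then the load-coupling system has a nonnegative solution: there exists ρ* ∈ ℝ_{≥0}^n with f_i(ρ*) = ρ*_i for every cell i. -/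
/-!
The load map `f` is monotone, so by Knaster–Tarski it has a fixed point in any box `[0, ρ̄]`
with `f ρ̄ ≤ ρ̄`. The inequality `ln (1 + 1/u) ≥ 1/(u + 1)` bounds each pixel term by an affine
function of the interference, so `f ρ ≤ h⁰ ρ - f 0 + d` with `d ≥ 0` independent of `ρ`.
If `ρ₀ = h⁰ ρ₀ ≥ 0`, then `ρ̄ = M ρ₀` is a super-solution as soon as `d ≤ M f 0`,
which holds for `M` large because `f 0 > 0`.
-/

open Finset Real

theorem exists_fixedPoint_mem_Icc {α : Type*} [ConditionallyCompleteLattice α] {F : α → α}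
    {a b : α} (hab : a ≤ b) (hF : MonotoneOn F (Set.Icc a b)) (ha : a ≤ F a) (hb : F b ≤ b) :
    ∃ x ∈ Set.Icc a b, F x = x := by
  have : Fact (a ≤ b) := ⟨hab⟩
  have hmaps : ∀ x ∈ Set.Icc a b, F x ∈ Set.Icc a b := fun x hx =>
    ⟨ha.trans (hF ⟨le_rfl, hab⟩ hx hx.1), (hF hx ⟨hab, le_rfl⟩ hx.2).trans hb⟩
  let G : Set.Icc a b →o Set.Icc a b :=
    ⟨fun x => ⟨F x, hmaps x x.2⟩, fun x y hxy => hF x.2 y.2 hxy⟩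
  exact ⟨G.lfp, G.lfp.2, congrArg Subtype.val G.map_lfp⟩

theorem one_div_add_one_le_log_one_add_one_div {u : ℝ} (hu : 0 < u) :
    1 / (u + 1) ≤ log (1 + 1 / u) := by
  have h := one_sub_inv_le_log_of_pos (x := 1 + 1 / u) (by positivity)
  have e : 1 - (1 + 1 / u)⁻¹ = 1 / (u + 1) := by field_simp; ring
  rwa [e] at h

noncomputable def pixelLoad (A u : ℝ) : ℝ := 1 / (A * logb 2 (1 + 1 / u))

section PixelLoad

variable {A u : ℝ}

theorem logb_two_one_add_one_div_pos (hu : 0 < u) : 0 < logb 2 (1 + 1 / u) :=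
  logb_pos one_lt_two (lt_add_of_pos_right 1 (one_div_pos.mpr hu))

theorem pixelLoad_pos (hA : 0 < A) (hu : 0 < u) : 0 < pixelLoad A u :=
  one_div_pos.mpr (mul_pos hA (logb_two_one_add_one_div_pos hu))

theorem pixelLoad_le_pixelLoad {v : ℝ} (hA : 0 < A) (hu : 0 < u) (huv : u ≤ v) :
    pixelLoad A u ≤ pixelLoad A v := by
  have hv := hu.trans_le huv
  refine one_div_le_one_div_of_le (mul_pos hA (logb_two_one_add_one_div_pos hv)) ?_
  refine mul_le_mul_of_nonneg_left ?_ hA.le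
  refine logb_le_logb_of_le one_lt_two (by positivity) ?_
  gcongr

theorem pixelLoad_le (hA : 0 < A) (hu : 0 < u) : pixelLoad A u ≤ log 2 * ((u + 1) / A) := by
  have hlog := one_div_add_one_le_log_one_add_one_div hu
  calc pixelLoad A u = log 2 / (A * log (1 + 1 / u)) := by
        rw [pixelLoad, logb]; field_simp
    _ ≤ log 2 / (A * (1 / (u + 1))) := by
        gcongr
    _ = log 2 * ((u + 1) / A) := by field_simp

end PixelLoad

section LoadCoupling

variable {ι κ : Type*} [Fintype ι] [DecidableEq ι]
  (J : ι → Finset κ) (a c : ι → κ → ℝ) (b : ι → ι → κ → ℝ)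

/-- `loadFun J a c b ρ i` is the paper's `f_i(ρ)`. -/
noncomputable def loadFun (ρ : ι → ℝ) (i : ι) : ℝ :=
  ∑ j ∈ J i, pixelLoad (a i j) (∑ k ∈ univ.erase i, b i k j * ρ k + c i j)

/-- The paper's `H_{ik}`. -/
noncomputable def interferenceGain (i k : ι) : ℝ := log 2 * ∑ j ∈ J i, b i k j / a i j

variable {J a c b}

theorem interference_add_noise_pos (hc : ∀ i, ∀ j ∈ J i, 0 < c i j)
    (hb : ∀ i k, k ≠ i → ∀ j ∈ J i, 0 ≤ b i k j) {ρ : ι → ℝ} (hρ : 0 ≤ ρ) {i : ι} {j : κ}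
    (hj : j ∈ J i) : 0 < ∑ k ∈ univ.erase i, b i k j * ρ k + c i j :=
  add_pos_of_nonneg_of_pos
    (sum_nonneg fun k hk => mul_nonneg (hb i k (ne_of_mem_erase hk) j hj) (hρ k)) (hc i j hj)

theorem loadFun_zero_pos (ha : ∀ i, ∀ j ∈ J i, 0 < a i j) (hc : ∀ i, ∀ j ∈ J i, 0 < c i j)
    {i : ι} (hJ : (J i).Nonempty) : 0 < loadFun J a c b 0 i := by
  refine sum_pos (fun j hj => ?_) hJ
  simpa using pixelLoad_pos (ha i j hj) (hc i j hj)

theorem loadFun_monotoneOn (ha : ∀ i, ∀ j ∈ J i, 0 < a i j) (hc : ∀ i, ∀ j ∈ J i, 0 < c i j)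
    (hb : ∀ i k, k ≠ i → ∀ j ∈ J i, 0 ≤ b i k j) :
    MonotoneOn (loadFun J a c b) (Set.Ici 0) := by
  intro ρ hρ σ _ hρσ i
  refine sum_le_sum fun j hj => ?_
  refine pixelLoad_le_pixelLoad (ha i j hj) (interference_add_noise_pos hc hb hρ hj) ?_
  gcongr with k hk
  · exact hb i k (ne_of_mem_erase hk) j hj
  · exact hρσ k

theorem loadFun_le_affine (ha : ∀ i, ∀ j ∈ J i, 0 < a i j) (hc : ∀ i, ∀ j ∈ J i, 0 < c i j)
    (hb : ∀ i k, k ≠ i → ∀ j ∈ J i, 0 ≤ b i k j) {ρ : ι → ℝ} (hρ : 0 ≤ ρ) (i : ι) :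
    loadFun J a c b ρ i ≤ ∑ k ∈ univ.erase i, interferenceGain J a b i k * ρ k
      + log 2 * ∑ j ∈ J i, (c i j + 1) / a i j :=
  calc loadFun J a c b ρ i
      ≤ ∑ j ∈ J i, log 2 * ((∑ k ∈ univ.erase i, b i k j * ρ k + c i j + 1) / a i j) :=
        sum_le_sum fun j hj => pixelLoad_le (ha i j hj) (interference_add_noise_pos hc hb hρ hj)
    _ = _ := by
        simp only [interferenceGain, add_assoc, add_div, mul_add, sum_add_distrib, sum_div,
          mul_sum, sum_mul]
        rw [sum_comm]
        congr 1
        refine sum_congr rfl fun k _ => sum_congr rfl fun j _ => ?_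
        ring

theorem exists_loadFun_smul_le_smul (ha : ∀ i, ∀ j ∈ J i, 0 < a i j)
    (hc : ∀ i, ∀ j ∈ J i, 0 < c i j) (hb : ∀ i k, k ≠ i → ∀ j ∈ J i, 0 ≤ b i k j)
    (hJ : ∀ i, (J i).Nonempty) {ρ₀ : ι → ℝ} (hρ₀ : 0 ≤ ρ₀)
    (hfix : ∀ i, loadFun J a c b 0 i + ∑ k ∈ univ.erase i, interferenceGain J a b i k * ρ₀ k
      = ρ₀ i) :
    ∃ M : ℝ, 0 ≤ M ∧ loadFun J a c b (M • ρ₀) ≤ M • ρ₀ := by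
  set d : ι → ℝ := fun i => log 2 * ∑ j ∈ J i, (c i j + 1) / a i j
  have hd : ∀ i, 0 ≤ d i := fun i =>
    mul_nonneg (log_pos one_lt_two).le
      (sum_nonneg fun j hj => div_nonneg (by linarith [hc i j hj]) (ha i j hj).le)
  have hf0 : ∀ i, 0 < loadFun J a c b 0 i := fun i => loadFun_zero_pos ha hc (hJ i)
  set M := ∑ i, d i / loadFun J a c b 0 i
  have hdM : ∀ i, d i ≤ M * loadFun J a c b 0 i := fun i =>
    (div_le_iff₀ (hf0 i)).mp <|
      single_le_sum (fun i _ => div_nonneg (hd i) (hf0 i).le) (mem_univ i)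
  have hM : 0 ≤ M := sum_nonneg fun i _ => div_nonneg (hd i) (hf0 i).le
  refine ⟨M, hM, fun i => ?_⟩
  have hscale : ∑ k ∈ univ.erase i, interferenceGain J a b i k * (M • ρ₀) k
      = M * (ρ₀ i - loadFun J a c b 0 i) := by
    simp only [Pi.smul_apply, smul_eq_mul, mul_sum, ← hfix i, add_sub_cancel_left]
    exact sum_congr rfl fun k _ => by ring
  calc loadFun J a c b (M • ρ₀) i
      ≤ M * (ρ₀ i - loadFun J a c b 0 i) + d i := by
        rw [← hscale]
        exact loadFun_le_affine ha hc hb (smul_nonneg hM hρ₀) i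
    _ ≤ (M • ρ₀) i := by
        rw [Pi.smul_apply, smul_eq_mul]
        linarith [hdM i]

end LoadCoupling

theorem stmt_15_general
    (n : ℕ)
    (J : Fin n → Finset ℕ) (hJ : ∀ i, (J i).Nonempty)
    (a c : Fin n → ℕ → ℝ) (b : Fin n → Fin n → ℕ → ℝ)
    (ha : ∀ i, ∀ j ∈ J i, 0 < a i j)
    (hc : ∀ i, ∀ j ∈ J i, 0 < c i j)
    (hb : ∀ i k, k ≠ i → ∀ j ∈ J i, 0 < b i k j)
    (f : Fin n → (Fin n → ℝ) → ℝ)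
    (hf : ∀ i ρ, f i ρ =
      ∑ j ∈ J i, 1 / (a i j * Real.logb 2
        (1 + 1 / (∑ k ∈ Finset.univ.erase i, b i k j * ρ k + c i j))))
    (H : Fin n → Fin n → ℝ)
    (hH : ∀ i k, H i k = Real.log 2 * ∑ j ∈ J i, b i k j / a i j)
    (h0 : Fin n → (Fin n → ℝ) → ℝ)
    (hh0 : ∀ i ρ, h0 i ρ =
      f i 0 + ∑ k ∈ Finset.univ.erase i, H i k * ρ k)
    (ρ₀ : Fin n → ℝ) (hρ₀ : ∀ i, 0 ≤ ρ₀ i) (hfix : ∀ i, h0 i ρ₀ = ρ₀ i) :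
    ∃ ρstar : Fin n → ℝ, (∀ i, 0 ≤ ρstar i) ∧ ∀ i, f i ρstar = ρstar i := by
  obtain rfl : f = fun i ρ => loadFun J a c b ρ i := funext fun i => funext (hf i)
  obtain rfl : H = interferenceGain J a b := funext fun i => funext (hH i)
  have hb' : ∀ i k, k ≠ i → ∀ j ∈ J i, 0 ≤ b i k j := fun i k hki j hj => (hb i k hki j hj).le
  obtain ⟨M, hM, hsuper⟩ := exists_loadFun_smul_le_smul ha hc hb' hJ hρ₀
    fun i => (hh0 i ρ₀).symm.trans (hfix i)
  obtain ⟨ρ, ⟨hρ, -⟩, hfixed⟩ := exists_fixedPoint_mem_Icc (smul_nonneg hM hρ₀)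
    ((loadFun_monotoneOn ha hc hb').mono Set.Icc_subset_Ici_self)
    (fun i => (loadFun_zero_pos ha hc (hJ i)).le) hsuper
  exact ⟨ρ, hρ, congrFun hfixed⟩

/-- Sufficient condition: if the linear system `ρ = h⁰(ρ)` has a nonnegative
solution, then the load-coupling system `ρ = f(ρ)` has a nonnegative solution. -/
theorem stmt_15
    (n : ℕ) (hn : 2 ≤ n)
    (J : Fin n → Finset ℕ) (hJ : ∀ i, (J i).Nonempty)
    (a c : Fin n → ℕ → ℝ) (b : Fin n → Fin n → ℕ → ℝ)
    (ha : ∀ i, ∀ j ∈ J i, 0 < a i j)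
    (hc : ∀ i, ∀ j ∈ J i, 0 < c i j)
    (hb : ∀ i k, k ≠ i → ∀ j ∈ J i, 0 < b i k j)
    (f : Fin n → (Fin n → ℝ) → ℝ)
    (hf : ∀ i ρ, f i ρ =
      ∑ j ∈ J i, 1 / (a i j * Real.logb 2
        (1 + 1 / (∑ k ∈ Finset.univ.erase i, b i k j * ρ k + c i j))))
    (H : Fin n → Fin n → ℝ)
    (hH : ∀ i k, H i k = Real.log 2 * ∑ j ∈ J i, b i k j / a i j)
    (h0 : Fin n → (Fin n → ℝ) → ℝ)
    (hh0 : ∀ i ρ, h0 i ρ =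
      f i 0 + ∑ k ∈ Finset.univ.erase i, H i k * ρ k)
    (ρ₀ : Fin n → ℝ) (hρ₀ : ∀ i, 0 ≤ ρ₀ i) (hfix : ∀ i, h0 i ρ₀ = ρ₀ i) :
    ∃ ρstar : Fin n → ℝ, (∀ i, 0 ≤ ρstar i) ∧ ∀ i, f i ρstar = ρstar i :=
  stmt_15_general n J hJ a c b ha hc hb f hf H hH h0 hh0 ρ₀ hρ₀ hfix
end

section
/- The set {ρ ∈ ℝ^n : ρ_i ≥ 0 and ρ_i ≤ f_i(ρ) for every cell i} is a convex subset of ℝ^n. -/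
/-!
Write `φ x = (log (1 + x⁻¹))⁻¹`. Its derivative is `1 / g` with `g x = x (x + 1) log (1 + x⁻¹) ^ 2`,
and `g' = L ((2x + 1) L - 2) ≥ 0` where `L = log (1 + x⁻¹) ≥ 2 / (2x + 1)` (the first term of the
`artanh` series of `L`). So `φ` is concave on `(0, ∞)`, and each load `f i` is a nonnegative
combination of `φ` composed with affine maps that are positive on the orthant `ρ ≥ 0`, hence concave
there. The set in question is the intersection over `i` of the superlevel sets
`{ρ ≥ 0 | 0 ≤ f i ρ - ρ i}` of concave functions.
-/
open Real Set

theorem two_div_two_mul_add_one_le_log_one_add_inv {x : ℝ} (hx : 0 < x) :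
    2 / (2 * x + 1) ≤ log (1 + x⁻¹) := by
  have h := le_hasSum (hasSum_log_one_add_inv hx) 0 fun k _ => by positivity
  simpa [div_eq_mul_inv] using h

theorem log_one_add_inv_pos {x : ℝ} (hx : 0 < x) : 0 < log (1 + x⁻¹) :=
  log_pos (by simpa using hx)

theorem hasDerivAt_log_one_add_inv {x : ℝ} (hx : 0 < x) :
    HasDerivAt (fun y => log (1 + y⁻¹)) (-(x * (x + 1))⁻¹) x := by
  have h : 0 < 1 + x⁻¹ := by positivity
  refine (((hasDerivAt_inv hx.ne').const_add 1).log h.ne').congr_deriv ?_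
  field_simp

theorem hasDerivAt_inv_log_one_add_inv {x : ℝ} (hx : 0 < x) :
    HasDerivAt (fun y => (log (1 + y⁻¹))⁻¹) (x * (x + 1) * log (1 + x⁻¹) ^ 2)⁻¹ x := by
  refine ((hasDerivAt_log_one_add_inv hx).inv (log_one_add_inv_pos hx).ne').congr_deriv ?_
  field_simp

theorem hasDerivAt_mul_add_one_mul_log_one_add_inv_sq {x : ℝ} (hx : 0 < x) :
    HasDerivAt (fun y => y * (y + 1) * log (1 + y⁻¹) ^ 2)
      (log (1 + x⁻¹) * ((2 * x + 1) * log (1 + x⁻¹) - 2)) x := by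
  have h := ((hasDerivAt_id' x).mul ((hasDerivAt_id' x).add_const 1)).mul
    ((hasDerivAt_log_one_add_inv hx).pow 2)
  refine h.congr_deriv ?_
  simp only [Pi.mul_apply, Pi.pow_apply]
  generalize log (1 + x⁻¹) = L
  field_simp
  ring

theorem concaveOn_inv_log_one_add_inv :
    ConcaveOn ℝ (Ioi 0) fun x : ℝ => (log (1 + x⁻¹))⁻¹ := by
  have hg : ∀ x : ℝ, 0 < x → 0 < x * (x + 1) * log (1 + x⁻¹) ^ 2 := fun x hx => by
    have := log_one_add_inv_pos hx
    positivity
  refine concaveOn_of_hasDerivWithinAt2_nonpos (convex_Ioi 0)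
    (fun x hx => (hasDerivAt_inv_log_one_add_inv hx).continuousAt.continuousWithinAt)
    (fun x hx => (hasDerivAt_inv_log_one_add_inv (interior_subset hx)).hasDerivWithinAt)
    (fun x hx => ((hasDerivAt_mul_add_one_mul_log_one_add_inv_sq (interior_subset hx)).inv
      (hg x (interior_subset hx)).ne').hasDerivWithinAt) fun x hx => ?_
  rw [interior_Ioi, mem_Ioi] at hx
  have hL := log_one_add_inv_pos hx
  have hlower : 2 ≤ (2 * x + 1) * log (1 + x⁻¹) := by
    rw [← div_le_iff₀' (by positivity)]
    exact two_div_two_mul_add_one_le_log_one_add_inv hx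
  have hg' : 0 ≤ log (1 + x⁻¹) * ((2 * x + 1) * log (1 + x⁻¹) - 2) :=
    mul_nonneg hL.le (sub_nonneg.2 hlower)
  exact div_nonpos_of_nonpos_of_nonneg (neg_nonpos.2 hg') (sq_nonneg _)

theorem one_div_mul_logb_eq (A X : ℝ) :
    1 / (A * logb 2 (1 + 1 / X)) = (log 2 / A) * (log (1 + X⁻¹))⁻¹ := by
  rw [logb, one_div X]
  field_simp

theorem concaveOn_one_div_mul_logb {ι : Type*} (s : Finset ι) {A c : ℝ} {b : ι → ℝ}
    (hA : 0 ≤ A) (hb : ∀ k ∈ s, 0 ≤ b k) (hc : 0 < c) :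
    ConcaveOn ℝ (Ici 0) fun ρ : ι → ℝ =>
      1 / (A * logb 2 (1 + 1 / (∑ k ∈ s, b k * ρ k + c))) := by
  set X : (ι → ℝ) →ᵃ[ℝ] ℝ :=
    (∑ k ∈ s, b k • LinearMap.proj k).toAffineMap + AffineMap.const ℝ _ c
  have hX : ∀ ρ, X ρ = ∑ k ∈ s, b k * ρ k + c := fun ρ => by simp [X]
  have hpos : Ici 0 ⊆ X ⁻¹' Ioi 0 := fun ρ hρ => by
    rw [mem_preimage, hX, mem_Ioi]
    have := Finset.sum_nonneg fun k hk => mul_nonneg (hb k hk) (hρ k)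
    linarith
  have h := ((concaveOn_inv_log_one_add_inv.comp_affineMap X).subset hpos (convex_Ici 0)).smul
    (div_nonneg (log_nonneg one_le_two) hA)
  simpa only [one_div_mul_logb_eq, ← hX, smul_eq_mul, Function.comp_apply] using h

theorem concaveOn_sum_one_div_mul_logb {ι κ : Type*} (J : Finset κ) (s : Finset ι)
    {a c : κ → ℝ} {b : κ → ι → ℝ} (ha : ∀ j ∈ J, 0 ≤ a j) (hb : ∀ j ∈ J, ∀ k ∈ s, 0 ≤ b j k)
    (hc : ∀ j ∈ J, 0 < c j) :
    ConcaveOn ℝ (Ici 0) fun ρ : ι → ℝ =>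
      ∑ j ∈ J, 1 / (a j * logb 2 (1 + 1 / (∑ k ∈ s, b j k * ρ k + c j))) := by
  rw [← Finset.sum_fn]
  exact Finset.sum_induction _ (ConcaveOn ℝ (Ici 0)) (fun _ _ => ConcaveOn.add)
    (concaveOn_const 0 (convex_Ici 0))
    fun j hj => concaveOn_one_div_mul_logb s (ha j hj) (hb j hj) (hc j hj)

theorem stmt_17_general
    (n : ℕ)
    (J : Fin n → Finset ℕ)
    (a c : Fin n → ℕ → ℝ) (b : Fin n → Fin n → ℕ → ℝ)
    (ha : ∀ i, ∀ j ∈ J i, 0 < a i j)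
    (hc : ∀ i, ∀ j ∈ J i, 0 < c i j)
    (hb : ∀ i k, k ≠ i → ∀ j ∈ J i, 0 < b i k j)
    (f : Fin n → (Fin n → ℝ) → ℝ)
    (hf : ∀ i ρ, f i ρ =
      ∑ j ∈ J i, 1 / (a i j * Real.logb 2
        (1 + 1 / (∑ k ∈ Finset.univ.erase i, b i k j * ρ k + c i j)))) :
    Convex ℝ {ρ : Fin n → ℝ | ∀ i, 0 ≤ ρ i ∧ ρ i ≤ f i ρ} := by
  have hconcave : ∀ i, ConcaveOn ℝ (Ici 0) fun ρ => f i ρ - ρ i := fun i => by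
    refine ConcaveOn.sub ?_ ((LinearMap.proj (R := ℝ) i).convexOn (convex_Ici 0))
    rw [funext (hf i)]
    exact concaveOn_sum_one_div_mul_logb (J i) _ (fun j hj => (ha i j hj).le)
      (fun j hj k hk => (hb i k (Finset.ne_of_mem_erase hk) j hj).le) (hc i)
  convert convex_iInter fun i => (hconcave i).convex_ge 0 using 1
  ext ρ
  simp only [mem_ofPred_eq, mem_iInter, mem_Ici, Pi.le_def, Pi.zero_apply, sub_nonneg]
  exact ⟨fun h _ => ⟨fun k => (h k).1, (h _).2⟩, fun h i => ⟨(h i).1 i, (h i).2⟩⟩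

/-- The set `{ρ ≥ 0 : ρ ≤ f(ρ)}` is convex. -/
theorem stmt_17
    (n : ℕ) (hn : 2 ≤ n)
    (J : Fin n → Finset ℕ) (hJ : ∀ i, (J i).Nonempty)
    (a c : Fin n → ℕ → ℝ) (b : Fin n → Fin n → ℕ → ℝ)
    (ha : ∀ i, ∀ j ∈ J i, 0 < a i j)
    (hc : ∀ i, ∀ j ∈ J i, 0 < c i j)
    (hb : ∀ i k, k ≠ i → ∀ j ∈ J i, 0 < b i k j)
    (f : Fin n → (Fin n → ℝ) → ℝ)
    (hf : ∀ i ρ, f i ρ =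
      ∑ j ∈ J i, 1 / (a i j * Real.logb 2
        (1 + 1 / (∑ k ∈ Finset.univ.erase i, b i k j * ρ k + c i j)))) :
    Convex ℝ {ρ : Fin n → ℝ | ∀ i, 0 ≤ ρ i ∧ ρ i ≤ f i ρ} :=
  stmt_17_general n J a c b ha hc hb f hf
end
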